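/- Let $m \ge 1$, let $y_1,\dots,y_m$ be real numbers, and let $\beta \in (0,1)$. Then the Rockafellar–Uryasev auxiliary function $G(\alpha) = \alpha + \frac{1}{(1-\beta)m}\sum_{s=1}^m \max(y_s - \alpha, 0)$ attains its infimum over $\mathbb{R}$, and the minimum is attained at one of the sample points: there exists $s^* \in \{1,\dots,m\}$ such that $G(y_{s^*}) = \inf_{\alpha \in \mathbb{R}} G(\alpha)$. -/
import Mathlib


/-- For `β ∈ (0,1)`, the Rockafellar–Uryasev auxiliary function attains its infimum
over `ℝ`, and the minimum is attained at one of the sample points `y s*`. -/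
theorem RU_auxiliary_attains_min_at_sample (m : ℕ) (hm : 1 ≤ m) (y : Fin m → ℝ)
    (β : ℝ) (hβ : β ∈ Set.Ioo (0 : ℝ) 1) :
    ∃ sstar : Fin m,
      IsLeast
        (Set.range (fun α : ℝ => α + (1 / ((1 - β) * m)) * ∑ s, max (y s - α) 0))
        ((y sstar) + (1 / ((1 - β) * m)) * ∑ s, max (y s - y sstar) 0) := by
  obtain ⟨hβ0, hβ1⟩ := hβ
  have hm0 : (0:ℝ) < m := by exact_mod_cast Nat.lt_of_lt_of_le Nat.zero_lt_one hm
  have h1β : (0:ℝ) < 1 - β := by linarith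
  set c : ℝ := 1 / ((1 - β) * m) with hc
  have hcpos : 0 < c := by positivity
  set G : ℝ → ℝ := fun α => α + c * ∑ s, max (y s - α) 0 with hG
  have hcm : 1 - c * m < 0 := by
    have h1 : c * m = 1 / (1 - β) := by
      rw [hc]; field_simp
    rw [h1]
    have : 1 < 1 / (1 - β) := by
      rw [lt_div_iff₀ h1β]; linarith
    linarith
  -- affine formula for G on intervals
  have keyf : ∀ α t : ℝ, (∀ s : Fin m, y s ≤ α → y s ≤ t) →
      (∀ s : Fin m, α < y s → t ≤ y s) →
      G t = t * (1 - c * ((Finset.univ.filter (fun s => α < y s)).card : ℝ)) +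
        c * ∑ s ∈ Finset.univ.filter (fun s => α < y s), y s := by
    intro α t h1 h2
    have hsplit := Finset.sum_filter_add_sum_filter_not Finset.univ
        (fun s : Fin m => α < y s) (fun s => max (y s - t) 0)
    have hA : ∑ s ∈ Finset.univ.filter (fun s : Fin m => ¬ α < y s),
        max (y s - t) 0 = 0 := by
      apply Finset.sum_eq_zero
      intro s hs
      simp only [Finset.mem_filter, not_lt] at hs
      have := h1 s hs.2
      simp [max_eq_right, sub_nonpos.mpr this]
    have hB : ∑ s ∈ Finset.univ.filter (fun s : Fin m => α < y s), max (y s - t) 0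
        = ∑ s ∈ Finset.univ.filter (fun s : Fin m => α < y s), (y s - t) := by
      apply Finset.sum_congr rfl
      intro s hs
      simp only [Finset.mem_filter] at hs
      have := h2 s hs.2
      exact max_eq_left (by linarith)
    have hsum : ∑ s : Fin m, max (y s - t) 0
        = ∑ s ∈ Finset.univ.filter (fun s : Fin m => α < y s), (y s - t) := by
      rw [← hsplit, hA, hB, add_zero]
    have hsub : ∑ s ∈ Finset.univ.filter (fun s : Fin m => α < y s), (y s - t)
        = (∑ s ∈ Finset.univ.filter (fun s : Fin m => α < y s), y s)
          - ((Finset.univ.filter (fun s : Fin m => α < y s)).card : ℝ) * t := by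
      rw [Finset.sum_sub_distrib, Finset.sum_const, nsmul_eq_mul]
    rw [hG]
    simp only
    rw [hsum, hsub]
    ring
  have key : ∀ α : ℝ, ∃ s : Fin m, G (y s) ≤ G α := by
    intro α
    have hsum : (Finset.univ.filter (fun s : Fin m => α < y s)).card
        + (Finset.univ.filter (fun s : Fin m => ¬ α < y s)).card = m := by
      have h := Finset.card_filter_add_card_filter_not
        (s := (Finset.univ : Finset (Fin m))) (p := fun s : Fin m => α < y s)
      simpa using h
    by_cases hslope : 0 ≤ 1 - c * ((Finset.univ.filter (fun s : Fin m => α < y s)).card : ℝ)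
    · have hAne : (Finset.univ.filter (fun s : Fin m => ¬ α < y s)).Nonempty := by
        rw [← Finset.card_pos]
        by_contra h
        have h0 : (Finset.univ.filter (fun s : Fin m => ¬ α < y s)).card = 0 := by omega
        have hkm' : (Finset.univ.filter (fun s : Fin m => α < y s)).card = m := by omega
        rw [hkm'] at hslope
        linarith
      obtain ⟨a, ha, hamax⟩ := Finset.exists_max_image _ (fun s => y s) hAne
      refine ⟨a, ?_⟩
      have hya : y a ≤ α := not_lt.mp (Finset.mem_filter.mp ha).2
      rw [keyf α (y a) (fun s hs => hamax s (Finset.mem_filter.mpr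
            ⟨Finset.mem_univ s, not_lt.mpr hs⟩))
          (fun s hs => le_trans hya (le_of_lt hs)),
        keyf α α (fun s hs => hs) (fun s hs => le_of_lt hs)]
      have hmul := mul_le_mul_of_nonneg_right hya hslope
      linarith
    · have hBne : (Finset.univ.filter (fun s : Fin m => α < y s)).Nonempty := by
        rw [← Finset.card_pos]
        by_contra h
        have h0 : (Finset.univ.filter (fun s : Fin m => α < y s)).card = 0 := by omega
        rw [h0] at hslope
        simp at hslope
      obtain ⟨b, hb, hbmin⟩ := Finset.exists_min_image _ (fun s => y s) hBne
      refine ⟨b, ?_⟩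
      have hyb : α < y b := (Finset.mem_filter.mp hb).2
      rw [keyf α (y b) (fun s hs => by linarith)
          (fun s hs => hbmin s (Finset.mem_filter.mpr ⟨Finset.mem_univ s, hs⟩)),
        keyf α α (fun s hs => hs) (fun s hs => le_of_lt hs)]
      have hslope' := not_le.mp hslope
      nlinarith
  have hne : (Finset.univ : Finset (Fin m)).Nonempty := ⟨⟨0, hm⟩, Finset.mem_univ _⟩
  obtain ⟨sstar, _, hs⟩ := Finset.exists_min_image Finset.univ (fun s => G (y s)) hne
  refine ⟨sstar, ⟨⟨y sstar, rfl⟩, ?_⟩⟩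
  rintro z ⟨α, rfl⟩
  obtain ⟨s, hsle⟩ := key α
  exact le_trans (hs s (Finset.mem_univ s)) hsle
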